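/- arXiv:2001.03867 — 2 statements merged into one kernel-verified Lean document; each statement's English description precedes it below -/
import Mathlib

section
/- (Rump's determinant lower bound) Let A be a d×d real matrix with spectral radius ρ(A) < 1. Then det(I_d + A) ≥ exp( tr(A) - ‖A‖_F² / (2(1 - ρ(A))) ), where ‖A‖_F is the Frobenius norm. -/
open Matrix

/-- Frobenius norm squared of a square matrix. -/
noncomputable def frobSq {d : ℕ} (A : Matrix (Fin d) (Fin d) ℝ) : ℝ :=
  ∑ i, ∑ j, (A i j) ^ 2

/-!
Diagonalising `A = U diag(μ) Uᴴ` gives `det (1 + A) = ∏ (1 + μᵢ)`, `tr A = ∑ μᵢ` and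
`‖A‖_F² = tr (A²) = ∑ μᵢ²`, so the bound splits into the scalar inequalities
`exp (μ - μ² / (2 (1 - ρ))) ≤ 1 + μ` for `|μ| ≤ ρ < 1`. These follow from the logarithm series:
`μ - log (1 + μ) = ∑ₙ (-μ)ⁿ⁺² / (n + 2) ≤ (μ² / 2) ∑ₙ |μ|ⁿ = μ² / (2 (1 - |μ|))`.
-/

open Real

theorem sub_log_one_add_le_sq_div {x : ℝ} (hx : |x| < 1) :
    x - log (1 + x) ≤ x ^ 2 / (2 * (1 - |x|)) := by
  have hlog : HasSum (fun n : ℕ => (-x) ^ (n + 1) / (n + 1)) (-log (1 + x)) := by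
    simpa using hasSum_pow_div_log_of_abs_lt_one (x := -x) (by rwa [abs_neg])
  have htail : HasSum (fun n : ℕ => (-x) ^ (n + 1 + 1) / ((n + 1 : ℕ) + 1)) (x - log (1 + x)) := by
    have h := (hasSum_nat_add_iff' 1).mpr hlog
    rwa [Finset.sum_range_one, zero_add, pow_one, Nat.cast_zero, zero_add, div_one, sub_neg_eq_add,
      neg_add_eq_sub] at h
  have hgeom : HasSum (fun n : ℕ => x ^ 2 / 2 * |x| ^ n) (x ^ 2 / 2 * (1 - |x|)⁻¹) :=
    (hasSum_geometric_of_lt_one (abs_nonneg x) hx).mul_left _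
  rw [← div_div, div_eq_mul_inv]
  refine hasSum_le (fun n => ?_) htail hgeom
  calc (-x) ^ (n + 1 + 1) / ((n + 1 : ℕ) + 1) ≤ |x| ^ n * x ^ 2 / ((n + 1 : ℕ) + 1) := by
        gcongr
        calc (-x) ^ (n + 1 + 1) ≤ |(-x) ^ (n + 2)| := le_abs_self _
          _ = |x| ^ n * x ^ 2 := by rw [abs_pow, abs_neg, pow_add, sq_abs]
    _ ≤ |x| ^ n * x ^ 2 / 2 := by gcongr; push_cast; linarith [n.cast_nonneg (α := ℝ)]
    _ = x ^ 2 / 2 * |x| ^ n := by ring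

theorem exp_sub_sq_div_le_one_add {x ρ : ℝ} (hx : |x| ≤ ρ) (hρ : ρ < 1) :
    exp (x - x ^ 2 / (2 * (1 - ρ))) ≤ 1 + x := by
  have hx1 : |x| < 1 := hx.trans_lt hρ
  have hpos : 0 < 1 + x := by linarith [neg_abs_le x]
  rw [← exp_log hpos, exp_le_exp]
  have hdenom : x ^ 2 / (2 * (1 - |x|)) ≤ x ^ 2 / (2 * (1 - ρ)) := by gcongr
  linarith [sub_log_one_add_le_sq_div hx1]

namespace Matrix

variable {𝕜 n : Type*} [RCLike 𝕜] [Fintype n] [DecidableEq n]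

open Unitary

theorem det_conjStarAlgAut (u : unitaryGroup n 𝕜) (M : Matrix n n 𝕜) :
    (conjStarAlgAut 𝕜 _ u M).det = M.det := by
  rw [conjStarAlgAut_apply, det_mul_comm, ← Matrix.mul_assoc, coe_star_mul_self, Matrix.one_mul]

theorem trace_conjStarAlgAut (u : unitaryGroup n 𝕜) (M : Matrix n n 𝕜) :
    (conjStarAlgAut 𝕜 _ u M).trace = M.trace := by
  rw [conjStarAlgAut_apply, trace_mul_cycle, coe_star_mul_self, Matrix.one_mul]

theorem IsHermitian.det_one_add {A : Matrix n n 𝕜} (hA : A.IsHermitian) :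
    (1 + A).det = ∏ i, (1 + (hA.eigenvalues i : 𝕜)) := by
  conv_lhs => rw [hA.spectral_theorem, ← map_one (conjStarAlgAut 𝕜 _ hA.eigenvectorUnitary),
    ← map_add, det_conjStarAlgAut, ← diagonal_one, diagonal_add, det_diagonal]
  rfl

theorem IsHermitian.trace_mul_self {A : Matrix n n 𝕜} (hA : A.IsHermitian) :
    (A * A).trace = ∑ i, (hA.eigenvalues i : 𝕜) ^ 2 := by
  conv_lhs => rw [hA.spectral_theorem, ← map_mul, trace_conjStarAlgAut, diagonal_mul_diagonal,
    trace_diagonal]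
  simp [sq]

end Matrix

theorem frobSq_eq_trace_mul_transpose {d : ℕ} (A : Matrix (Fin d) (Fin d) ℝ) :
    frobSq A = (A * Aᵀ).trace := by
  simp [frobSq, trace, mul_apply, sq]

/-- Rump's determinant lower bound: for a symmetric real matrix `A` whose eigenvalues are all of
absolute value at most `ρ < 1`,
`det(I + A) ≥ exp(tr A - ‖A‖_F² / (2(1 - ρ)))`. -/
theorem rump_det_lower_bound {d : ℕ} (A : Matrix (Fin d) (Fin d) ℝ)
    (hA : A.IsHermitian) (ρ : ℝ) (hρ₁ : ∀ i, |hA.eigenvalues i| ≤ ρ) (hρ : ρ < 1) :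
    Real.exp (A.trace - frobSq A / (2 * (1 - ρ))) ≤ (1 + A).det := by
  have hexponent : A.trace - frobSq A / (2 * (1 - ρ)) =
      ∑ i, (hA.eigenvalues i - hA.eigenvalues i ^ 2 / (2 * (1 - ρ))) := by
    rw [frobSq_eq_trace_mul_transpose, ← conjTranspose_eq_transpose_of_trivial, hA.eq,
      hA.trace_mul_self, hA.trace_eq_sum_eigenvalues, Finset.sum_sub_distrib, Finset.sum_div]
    simp
  rw [hexponent, exp_sum, hA.det_one_add]
  exact Finset.prod_le_prod (fun i _ => (exp_pos _).le)
    fun i _ => exp_sub_sq_div_le_one_add (hρ₁ i) hρ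
end

section
/- For modified Bessel functions of the first kind I_ν, if 0 < x < y and ν > -1/2, then exp(x - y)·(x/y)^ν < I_ν(x)/I_ν(y) < (x/y)^ν. -/
/-- The modified Bessel function of the first kind of order `ν`, defined by its power series
`I_ν(x) = Σ_{m≥0} (x/2)^{2m+ν} / (m! Γ(m+ν+1))`. -/
noncomputable def besselI (ν x : ℝ) : ℝ :=
  ∑' m : ℕ, (x / 2) ^ (2 * m) * (x / 2) ^ ν /
    ((m.factorial : ℝ) * Real.Gamma ((m : ℝ) + ν + 1))

/-!
Write `I_ν(z) = (z/2)^ν A(z²)` with `A(t) = Σ t^m / (4^m m! Γ(m+ν+1))`, and `cosh z = C(z²)` with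
`C(t) = Σ t^m / (2m)!`. Since `A` is increasing, `I_ν(x) / I_ν(y) < (x/y)^ν`.
The quotients `a_m / c_m` of the coefficients decrease, with successive ratio
`(2m+1) / (2m+2ν+2) < 1` precisely because `ν > -1/2`. In the double series for
`A(t) C(s) - A(s) C(t)` the terms `(m, n)` and `(n, m)` together contribute
`(a_m c_n - a_n c_m)(t^m s^n - s^m t^n) ≤ 0`, so `A / C` decreases on `[0, ∞)`. Hence
`A(x²) / A(y²) > cosh x / cosh y > exp (x - y)`.
-/

open Real Filter

lemma pow_mul_pow_le_pow_mul_pow {s t : ℝ} (hs : 0 ≤ s) (hst : s ≤ t) {m n : ℕ} (hmn : m ≤ n) :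
    t ^ m * s ^ n ≤ s ^ m * t ^ n := by
  obtain ⟨k, rfl⟩ := Nat.exists_eq_add_of_le hmn
  have ht : 0 ≤ t := hs.trans hst
  calc t ^ m * s ^ (m + k) = s ^ m * t ^ m * s ^ k := by ring
    _ ≤ s ^ m * t ^ m * t ^ k := by gcongr
    _ = s ^ m * t ^ (m + k) := by ring

lemma HasSum.neg_of_add_comp_nonpos {α : Type*} {F : α → ℝ} {S : ℝ} (σ : α ≃ α)
    (hF : HasSum F S) (h : ∀ p, F p + F (σ p) ≤ 0) {p₀ : α} (hp₀ : F p₀ + F (σ p₀) < 0) :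
    S < 0 := by
  have hsymm : HasSum (fun p => F p + F (σ p)) (S + S) := hF.add (σ.hasSum_iff.2 hF)
  linarith [hasSum_lt h hp₀ hsymm hasSum_zero]

theorem HasSum.mul_lt_mul_of_strictAnti_div {a c : ℕ → ℝ} (ha : ∀ m, 0 ≤ a m)
    (hc : ∀ m, 0 < c m) (hac : StrictAnti fun m => a m / c m) {s t As At Cs Ct : ℝ}
    (hs : 0 ≤ s) (hst : s < t)
    (hAs : HasSum (fun m => a m * s ^ m) As) (hAt : HasSum (fun m => a m * t ^ m) At)
    (hCs : HasSum (fun m => c m * s ^ m) Cs) (hCt : HasSum (fun m => c m * t ^ m) Ct) :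
    At * Cs < As * Ct := by
  have ht : 0 ≤ t := hs.trans hst.le
  have hprod : ∀ {u v U V : ℝ}, 0 ≤ u → 0 ≤ v → HasSum (fun m => a m * u ^ m) U →
      HasSum (fun m => c m * v ^ m) V →
      HasSum (fun p : ℕ × ℕ => a p.1 * u ^ p.1 * (c p.2 * v ^ p.2)) (U * V) :=
    fun hu hv hU hV => hU.mul hV <| hU.summable.mul_of_nonneg hV.summable
      (fun m => mul_nonneg (ha m) (pow_nonneg hu m))
      (fun m => mul_nonneg (hc m).le (pow_nonneg hv m))
  have hcross {m n : ℕ} (h : m ≤ n) : a n * c m ≤ a m * c n := by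
    rw [← div_le_div_iff₀ (hc n) (hc m)]
    exact hac.antitone h
  have hsymm (m n : ℕ) : a m * t ^ m * (c n * s ^ n) - a m * s ^ m * (c n * t ^ n) +
      (a n * t ^ n * (c m * s ^ m) - a n * s ^ n * (c m * t ^ m)) =
      (a m * c n - a n * c m) * (t ^ m * s ^ n - s ^ m * t ^ n) := by ring
  refine sub_neg.1 <| ((hprod ht hs hAt hCs).sub (hprod hs ht hAs hCt)).neg_of_add_comp_nonpos
    (Equiv.prodComm ℕ ℕ) (fun ⟨m, n⟩ => ?_) (p₀ := (0, 1)) ?_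
  · simp only [Equiv.prodComm_apply, Prod.fst_swap, Prod.snd_swap, hsymm]
    rcases le_total m n with h | h
    · exact mul_nonpos_of_nonneg_of_nonpos (sub_nonneg.2 (hcross h))
        (sub_nonpos.2 (pow_mul_pow_le_pow_mul_pow hs hst.le h))
    · exact mul_nonpos_of_nonpos_of_nonneg (sub_nonpos.2 (hcross h))
        (by linarith [pow_mul_pow_le_pow_mul_pow hs hst.le h])
  · simp only [Equiv.prodComm_apply, Prod.fst_swap, Prod.snd_swap, hsymm]
    have h01 : a 1 * c 0 < a 0 * c 1 := by
      rw [← div_lt_div_iff₀ (hc 1) (hc 0)]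
      exact hac zero_lt_one
    exact mul_neg_of_pos_of_neg (sub_pos.2 h01) (by simpa using hst)

lemma summable_mul_pow_of_succ_le_div {f : ℕ → ℝ} (hf : ∀ m, 0 ≤ f m)
    (hsucc : ∀ᶠ m in atTop, f (m + 1) ≤ f m / (m + 1)) {t : ℝ} (ht : 0 ≤ t) :
    Summable fun m => f m * t ^ m := by
  refine summable_of_ratio_norm_eventually_le (r := 1 / 2) (by norm_num) ?_
  filter_upwards [hsucc, eventually_ge_atTop ⌈2 * t⌉₊] with m hm hmt
  have hmt' : 2 * t ≤ m := (Nat.le_ceil _).trans (by exact_mod_cast hmt)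
  have hfm := hf m
  have hfm' := hf (m + 1)
  rw [norm_of_nonneg (by positivity), norm_of_nonneg (by positivity)]
  calc f (m + 1) * t ^ (m + 1) ≤ f m / (m + 1) * t ^ (m + 1) := by gcongr
    _ = f m * t ^ m * (t / (m + 1)) := by ring
    _ ≤ f m * t ^ m * (1 / 2) := by
      refine mul_le_mul_of_nonneg_left ?_ (by positivity)
      rw [div_le_iff₀ (by positivity)]
      linarith
    _ = 1 / 2 * (f m * t ^ m) := by ring

noncomputable def besselCoeff (ν : ℝ) (m : ℕ) : ℝ :=
  ((4 : ℝ) ^ m * m.factorial * Gamma (m + ν + 1))⁻¹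

noncomputable def besselSeries (ν t : ℝ) : ℝ :=
  ∑' m, besselCoeff ν m * t ^ m

noncomputable def coshCoeff (m : ℕ) : ℝ :=
  ((2 * m).factorial : ℝ)⁻¹

theorem besselI_eq_rpow_mul_besselSeries (ν z : ℝ) :
    besselI ν z = (z / 2) ^ ν * besselSeries ν (z ^ 2) := by
  rw [besselI, besselSeries, ← tsum_mul_left]
  congr 1 with m
  rw [besselCoeff, pow_mul, show (z / 2) ^ 2 = z ^ 2 / 4 by ring, div_pow]
  ring

section BesselSeries

variable {ν : ℝ}

lemma besselCoeff_pos (hν : -1 < ν) (m : ℕ) : 0 < besselCoeff ν m := by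
  have := Gamma_pos_of_pos (show 0 < (m : ℝ) + ν + 1 by linarith [m.cast_nonneg (α := ℝ)])
  unfold besselCoeff
  positivity

lemma besselCoeff_succ (hν : -1 < ν) (m : ℕ) :
    besselCoeff ν (m + 1) = besselCoeff ν m / (4 * (m + 1) * (m + ν + 1)) := by
  have hpos : 0 < (m : ℝ) + ν + 1 := by linarith [m.cast_nonneg (α := ℝ)]
  have hG : Gamma ((m + 1 : ℕ) + ν + 1) = (m + ν + 1) * Gamma (m + ν + 1) := by
    rw [show ((m + 1 : ℕ) : ℝ) + ν + 1 = (m + ν + 1) + 1 by push_cast; ring,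
      Gamma_add_one hpos.ne']
  rw [besselCoeff, besselCoeff, hG, Nat.factorial_succ, pow_succ]
  push_cast
  field_simp

lemma coshCoeff_pos (m : ℕ) : 0 < coshCoeff m := by
  unfold coshCoeff
  positivity

lemma coshCoeff_succ (m : ℕ) :
    coshCoeff (m + 1) = coshCoeff m / ((2 * m + 1) * (2 * m + 2)) := by
  rw [coshCoeff, coshCoeff, show 2 * (m + 1) = 2 * m + 1 + 1 by ring, Nat.factorial_succ,
    Nat.factorial_succ]
  push_cast
  field_simp
  ring

lemma strictAnti_besselCoeff_div_coshCoeff (hν : -1 / 2 < ν) :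
    StrictAnti fun m => besselCoeff ν m / coshCoeff m := by
  refine strictAnti_nat_of_succ_lt fun m => ?_
  have hν' : -1 < ν := by linarith
  have := besselCoeff_pos hν' m
  have := coshCoeff_pos m
  have hpos : 0 < (m : ℝ) + ν + 1 := by linarith [m.cast_nonneg (α := ℝ)]
  have hquot : besselCoeff ν (m + 1) / coshCoeff (m + 1) =
      besselCoeff ν m / coshCoeff m * ((2 * m + 1) / (2 * (m + ν + 1))) := by
    rw [besselCoeff_succ hν', coshCoeff_succ]
    field_simp
    ring
  rw [hquot]
  exact mul_lt_of_lt_one_right (by positivity) ((div_lt_one (by positivity)).2 (by linarith))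

lemma summable_besselCoeff_mul_pow (hν : -1 < ν) {t : ℝ} (ht : 0 ≤ t) :
    Summable fun m => besselCoeff ν m * t ^ m := by
  refine summable_mul_pow_of_succ_le_div (fun m => (besselCoeff_pos hν m).le) ?_ ht
  filter_upwards [eventually_ge_atTop 1] with m hm
  have hm' : (1 : ℝ) ≤ m := by exact_mod_cast hm
  rw [besselCoeff_succ hν]
  exact div_le_div_of_nonneg_left (besselCoeff_pos hν m).le (by positivity) (by nlinarith)

lemma besselSeries_pos (hν : -1 < ν) {t : ℝ} (ht : 0 ≤ t) : 0 < besselSeries ν t :=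
  (summable_besselCoeff_mul_pow hν ht).tsum_pos
    (fun m => mul_nonneg (besselCoeff_pos hν m).le (pow_nonneg ht m)) 0
    (by simpa using besselCoeff_pos hν 0)

lemma besselSeries_lt_besselSeries (hν : -1 < ν) {s t : ℝ} (hs : 0 ≤ s) (hst : s < t) :
    besselSeries ν s < besselSeries ν t :=
  (summable_besselCoeff_mul_pow hν hs).tsum_lt_tsum (i := 1)
    (fun m => mul_le_mul_of_nonneg_left (pow_le_pow_left₀ hs hst.le m) (besselCoeff_pos hν m).le)
    (by simpa using mul_lt_mul_of_pos_left hst (besselCoeff_pos hν 1))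
    (summable_besselCoeff_mul_pow hν (hs.trans hst.le))

lemma hasSum_coshCoeff_mul_pow (x : ℝ) :
    HasSum (fun m => coshCoeff m * (x ^ 2) ^ m) (cosh x) := by
  convert hasSum_cosh x using 2 with m
  rw [coshCoeff, ← pow_mul, inv_mul_eq_div]

lemma besselSeries_mul_cosh_lt (hν : -1 / 2 < ν) {x y : ℝ} (hx : 0 ≤ x) (hxy : x < y) :
    besselSeries ν (y ^ 2) * cosh x < besselSeries ν (x ^ 2) * cosh y := by
  have hν' : -1 < ν := by linarith
  exact HasSum.mul_lt_mul_of_strictAnti_div (fun m => (besselCoeff_pos hν' m).le) coshCoeff_pos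
    (strictAnti_besselCoeff_div_coshCoeff hν) (sq_nonneg x) (by gcongr)
    (summable_besselCoeff_mul_pow hν' (sq_nonneg x)).hasSum
    (summable_besselCoeff_mul_pow hν' (sq_nonneg y)).hasSum
    (hasSum_coshCoeff_mul_pow x) (hasSum_coshCoeff_mul_pow y)

end BesselSeries

lemma exp_sub_lt_cosh_div_cosh {x y : ℝ} (hxy : x < y) : exp (x - y) < cosh x / cosh y := by
  rw [lt_div_iff₀ (cosh_pos y), cosh_eq, cosh_eq]
  have hpos : exp (x - y) * exp y = exp x := by rw [← exp_add, sub_add_cancel]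
  have hneg : exp (x - y) * exp (-y) < exp (-x) := by
    rw [← exp_add, exp_lt_exp]
    linarith
  linarith

/-- Paris' inequality: for `0 < x < y` and `ν > -1/2`,
`exp(x - y)·(x/y)^ν < I_ν(x)/I_ν(y) < (x/y)^ν`. -/
theorem besselI_ratio_bounds (ν x y : ℝ) (hx : 0 < x) (hxy : x < y) (hν : -1 / 2 < ν) :
    Real.exp (x - y) * (x / y) ^ ν < besselI ν x / besselI ν y ∧
    besselI ν x / besselI ν y < (x / y) ^ ν := by
  have hy : 0 < y := hx.trans hxy
  have hA : 0 < besselSeries ν (y ^ 2) := besselSeries_pos (by linarith) (sq_nonneg y)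
  have hpow : 0 < (x / y) ^ ν := rpow_pos_of_pos (div_pos hx hy) ν
  have hratio : besselI ν x / besselI ν y =
      (x / y) ^ ν * (besselSeries ν (x ^ 2) / besselSeries ν (y ^ 2)) := by
    rw [besselI_eq_rpow_mul_besselSeries, besselI_eq_rpow_mul_besselSeries, mul_div_mul_comm,
      ← div_rpow (by positivity) (by positivity), div_div_div_cancel_right₀ two_ne_zero]
  rw [hratio, mul_comm (exp _)]
  constructor
  · refine mul_lt_mul_of_pos_left ((exp_sub_lt_cosh_div_cosh hxy).trans ?_) hpow
    rw [div_lt_div_iff₀ (cosh_pos y) hA]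
    linarith [besselSeries_mul_cosh_lt hν hx.le hxy]
  · refine mul_lt_of_lt_one_right hpow ((div_lt_one hA).2 ?_)
    exact besselSeries_lt_besselSeries (by linarith) (sq_nonneg x) (by gcongr)
end
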